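/- arXiv:1504.06790 — 6 statements merged into one kernel-verified Lean document; each statement's English description precedes it below -/
import Mathlib

section
/- Let A, B be m×n complex matrices. Then A Aᴴ = B Bᴴ if and only if there exists a unitary n×n matrix V such that A = B V. -/
/-!
If `A Aᴴ = B Bᴴ`, the maps `x ↦ Aᴴ x` and `x ↦ Bᴴ x` have the same Gram operator, hence
`‖Aᴴ x‖ = ‖Bᴴ x‖` for every `x`. So `Bᴴ x ↦ Aᴴ x` is a well-defined linear isometry on the range
of `Bᴴ`, which extends to a linear isometry `U` of the whole space; its matrix is unitary and
`Aᴴ = U Bᴴ`, i.e. `A = B Uᴴ`.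
-/

open Matrix LinearMap

namespace LinearMap

variable {R M M₂ M₃ : Type*} [Ring R] [AddCommGroup M] [AddCommGroup M₂] [AddCommGroup M₃]
  [Module R M] [Module R M₂] [Module R M₃]

noncomputable def rangeLift (f : M →ₗ[R] M₃) (g : M →ₗ[R] M₂) (h : ker g ≤ ker f) :
    range g →ₗ[R] M₃ :=
  (ker g).liftQ f h ∘ₗ g.quotKerEquivRange.symm.toLinearMap

theorem rangeLift_apply (f : M →ₗ[R] M₃) (g : M →ₗ[R] M₂) (h : ker g ≤ ker f) (x : M) :
    rangeLift f g h ⟨g x, mem_range_self g x⟩ = f x := by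
  simp only [rangeLift, coe_comp, LinearEquiv.coe_coe, Function.comp_apply,
    quotKerEquivRange_symm_apply_image]
  exact Submodule.liftQ_apply _ f x

end LinearMap

section InnerProductSpace

variable {𝕜 E F : Type*} [RCLike 𝕜] [NormedAddCommGroup E] [InnerProductSpace 𝕜 E]
  [NormedAddCommGroup F] [InnerProductSpace 𝕜 F]

theorem LinearMap.norm_map_eq_of_adjoint_comp_self_eq [FiniteDimensional 𝕜 E]
    [FiniteDimensional 𝕜 F] {f g : E →ₗ[𝕜] F} (h : adjoint f ∘ₗ f = adjoint g ∘ₗ g) (x : E) :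
    ‖f x‖ = ‖g x‖ := by
  have norm_sq (u : E →ₗ[𝕜] F) : ‖u x‖ ^ 2 = RCLike.re (inner 𝕜 ((adjoint u ∘ₗ u) x) x) := by
    rw [comp_apply, adjoint_inner_left, inner_self_eq_norm_sq]
  rw [← sq_eq_sq₀ (norm_nonneg _) (norm_nonneg _), norm_sq, norm_sq, h]

theorem LinearMap.exists_linearIsometry_comp_eq_of_norm_eq {V : Type*} [AddCommGroup V]
    [Module 𝕜 V] [FiniteDimensional 𝕜 F] {f g : V →ₗ[𝕜] F} (h : ∀ x, ‖f x‖ = ‖g x‖) :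
    ∃ W : F →ₗᵢ[𝕜] F, W.toLinearMap ∘ₗ g = f := by
  have hker : ker g ≤ ker f := fun x hx ↦ by
    rw [mem_ker, ← norm_eq_zero, h, norm_eq_zero, ← mem_ker]
    exact hx
  let L : range g →ₗᵢ[𝕜] F :=
    ⟨rangeLift f g hker, by rintro ⟨-, x, rfl⟩; rw [rangeLift_apply, h]; rfl⟩
  refine ⟨L.extend, LinearMap.ext fun x ↦ ?_⟩
  exact (L.extend_apply ⟨g x, mem_range_self g x⟩).trans (rangeLift_apply f g hker x)

end InnerProductSpace

namespace Matrix

variable {𝕜 m n : Type*} [RCLike 𝕜] [Fintype m] [DecidableEq m] [Fintype n] [DecidableEq n]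

theorem toEuclideanLin_mul_conjTranspose (A : Matrix m n 𝕜) :
    toEuclideanLin (A * Aᴴ) = adjoint (toEuclideanLin Aᴴ) ∘ₗ toEuclideanLin Aᴴ := by
  rw [← toEuclideanLin_conjTranspose_eq_adjoint, conjTranspose_conjTranspose, toLpLin_mul_same]

theorem toEuclideanLin_symm_mem_unitaryGroup
    (W : EuclideanSpace 𝕜 n →ₗᵢ[𝕜] EuclideanSpace 𝕜 n) :
    toEuclideanLin.symm W.toLinearMap ∈ unitaryGroup n 𝕜 := by
  rw [mem_unitaryGroup_iff', star_eq_conjTranspose]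
  apply toEuclideanLin.injective
  rw [toLpLin_mul_same, toEuclideanLin_conjTranspose_eq_adjoint, LinearEquiv.apply_symm_apply,
    LinearIsometry.adjoint_comp_self', toLpLin_one]

theorem exists_mem_unitaryGroup_eq_mul_of_mul_conjTranspose_eq {A B : Matrix m n 𝕜}
    (h : A * Aᴴ = B * Bᴴ) : ∃ V ∈ unitaryGroup n 𝕜, A = B * V := by
  have hnorm := norm_map_eq_of_adjoint_comp_self_eq (f := toEuclideanLin Aᴴ)
    (g := toEuclideanLin Bᴴ) (by rw [← toEuclideanLin_mul_conjTranspose, h,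
      toEuclideanLin_mul_conjTranspose])
  obtain ⟨W, hW⟩ := exists_linearIsometry_comp_eq_of_norm_eq hnorm
  set U := toEuclideanLin.symm W.toLinearMap
  have hU : Aᴴ = U * Bᴴ := toEuclideanLin.injective <| by
    rw [toLpLin_mul_same, LinearEquiv.apply_symm_apply, hW]
  refine ⟨Uᴴ, Unitary.star_mem (toEuclideanLin_symm_mem_unitaryGroup W), ?_⟩
  rw [← conjTranspose_conjTranspose A, hU, conjTranspose_mul, conjTranspose_conjTranspose]

end Matrix

theorem mul_conjTranspose_eq_iff_exists_unitary (m n : ℕ)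
    (A B : Matrix (Fin m) (Fin n) ℂ) :
    A * Aᴴ = B * Bᴴ ↔
      ∃ V : Matrix (Fin n) (Fin n) ℂ, V * Vᴴ = 1 ∧ Vᴴ * V = 1 ∧ A = B * V := by
  constructor
  · intro h
    obtain ⟨V, hV, rfl⟩ := exists_mem_unitaryGroup_eq_mul_of_mul_conjTranspose_eq h
    exact ⟨V, mem_unitaryGroup_iff.mp hV, mem_unitaryGroup_iff'.mp hV, rfl⟩
  · rintro ⟨V, hV, -, rfl⟩
    rw [conjTranspose_mul, Matrix.mul_assoc, ← Matrix.mul_assoc V, hV, Matrix.one_mul]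
end

section
/- Let P be an invertible n×n complex matrix and let A, B be n×n complex matrices with A P = P B and Pᴴ A = B Pᴴ. Then the matrix (P Pᴴ)^{1/2} (the positive semidefinite square root of P Pᴴ) commutes with A. -/
open Matrix
open scoped ComplexOrder

/-- The positive semidefinite square root of a positive semidefinite matrix
(the definition removed from Mathlib, restated as it was). -/
noncomputable def Matrix.PosSemidef.sqrt {n 𝕜 : Type*} [Fintype n] [RCLike 𝕜] [DecidableEq n]
    {A : Matrix n n 𝕜} (hA : A.PosSemidef) : Matrix n n 𝕜 :=
  hA.1.eigenvectorUnitary.1 * diagonal ((↑) ∘ (√·) ∘ hA.1.eigenvalues) *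
  (star hA.1.eigenvectorUnitary : Matrix n n 𝕜)

/-!
The intertwining relations give `A (P Pᴴ) = P B Pᴴ = (P Pᴴ) A`. The square root of `P Pᴴ` is
`Real.sqrt` applied to it by the continuous functional calculus, so it commutes with every
matrix commuting with `P Pᴴ`.
-/

section

variable {n 𝕜 : Type*} [Fintype n] [RCLike 𝕜] [DecidableEq n] {A X : Matrix n n 𝕜}

theorem Matrix.PosSemidef.sqrt_eq_cfc (hA : A.PosSemidef) : hA.sqrt = cfc Real.sqrt A := by
  rw [hA.1.cfc_eq, IsHermitian.cfc, Unitary.conjStarAlgAut_apply]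
  rfl

theorem Commute.posSemidef_sqrt (h : Commute A X) (hA : A.PosSemidef) : Commute hA.sqrt X :=
  hA.sqrt_eq_cfc ▸ h.cfc_real Real.sqrt

end

theorem sqrt_commutes_general (n : ℕ) (P A B : Matrix (Fin n) (Fin n) ℂ)
    (h1 : A * P = P * B) (h2 : Pᴴ * A = B * Pᴴ) :
    (Matrix.posSemidef_self_mul_conjTranspose P).sqrt * A =
      A * (Matrix.posSemidef_self_mul_conjTranspose P).sqrt := by
  have hcomm : Commute (P * Pᴴ) A :=
    calc P * Pᴴ * A = P * (B * Pᴴ) := by rw [Matrix.mul_assoc, h2]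
      _ = A * (P * Pᴴ) := by rw [← Matrix.mul_assoc, ← h1, Matrix.mul_assoc]
  exact (hcomm.posSemidef_sqrt (Matrix.posSemidef_self_mul_conjTranspose P)).eq

theorem sqrt_commutes (n : ℕ) (P A B : Matrix (Fin n) (Fin n) ℂ)
    (hP : IsUnit P) (h1 : A * P = P * B) (h2 : Pᴴ * A = B * Pᴴ) :
    (Matrix.posSemidef_self_mul_conjTranspose P).sqrt * A =
      A * (Matrix.posSemidef_self_mul_conjTranspose P).sqrt :=
  sqrt_commutes_general n P A B h1 h2
end

section
/- Let A, B be n×n real matrices and suppose there exists a unitary complex matrix U with A U = U B. Then there exists an invertible real matrix P with A P = P B. -/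
open Matrix Polynomial

theorem real_intertwiner_of_unitary (n : ℕ) (A B : Matrix (Fin n) (Fin n) ℝ)
    (h : ∃ U : Matrix (Fin n) (Fin n) ℂ, U * Uᴴ = 1 ∧
      A.map (Complex.ofReal) * U = U * B.map (Complex.ofReal)) :
    ∃ P : Matrix (Fin n) (Fin n) ℝ, IsUnit P ∧ A * P = P * B := by
  obtain ⟨U, hU, hAU⟩ := h
  set X : Matrix (Fin n) (Fin n) ℝ := U.map Complex.re with hXdef
  set Y : Matrix (Fin n) (Fin n) ℝ := U.map Complex.im with hYdef
  have hX : A * X = X * B := by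
    ext i j
    have := congrArg (fun M => (M i j).re) hAU
    simpa [mul_apply, Complex.re_sum, hXdef, Matrix.map_apply] using this
  have hY : A * Y = Y * B := by
    ext i j
    have := congrArg (fun M => (M i j).im) hAU
    simpa [mul_apply, Complex.im_sum, hYdef, Matrix.map_apply] using this
  -- the polynomial det(X + t Y)
  set p : ℝ[X] := (X.map Polynomial.C + (Polynomial.X : ℝ[X]) • Y.map Polynomial.C).det with hp
  have hdetU : U.det ≠ 0 := by
    have : U.det * Uᴴ.det = 1 := by rw [← det_mul, hU, det_one]
    intro h0; rw [h0, zero_mul] at this; exact zero_ne_one this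
  have haeval : Polynomial.aeval Complex.I p = U.det := by
    rw [hp, AlgHom.map_det]
    congr 1
    ext i j
    simp only [AlgHom.mapMatrix_apply, Matrix.map_apply, Matrix.smul_apply,
      smul_eq_mul, Matrix.add_apply, map_add, _root_.map_mul, Polynomial.aeval_C, Polynomial.aeval_X,
      Complex.coe_algebraMap]
    simp only [hXdef, hYdef, Matrix.map_apply]
    rw [mul_comm]
    exact Complex.re_add_im _
  have hp0 : p ≠ 0 := by
    intro h0
    rw [h0, map_zero] at haeval
    exact hdetU haeval.symm
  obtain ⟨t, ht⟩ := p.exists_eval_ne_zero_of_natDegree_lt_card hp0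
    (lt_of_lt_of_le (Cardinal.nat_lt_aleph0 _) (Cardinal.aleph0_le_mk ℝ))
  have heval : Polynomial.eval t p = (X + t • Y).det := by
    rw [hp, ← Polynomial.coe_evalRingHom, RingHom.map_det]
    congr 1
    ext i j
    simp [Matrix.map_apply, Matrix.add_apply, Matrix.smul_apply, smul_eq_mul]
    ring
  refine ⟨X + t • Y, ?_, ?_⟩
  · rw [Matrix.isUnit_iff_isUnit_det, isUnit_iff_ne_zero, ← heval]
    exact ht
  · rw [mul_add, add_mul, hX, mul_smul_comm, smul_mul_assoc, hY]
end

section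
/- Let G be a monoid and let V, W be completely reducible finite-dimensional complex representations of G. If the characters agree, i.e., tr_V(g) = tr_W(g) for all g ∈ G, then V and W are isomorphic as G-modules. -/
/-!
Let `A = ℂ[G]`. For a simple `A`-module `S`, the projection of the semisimple module `V × W` onto
its `S`-isotypic component, along the sum of the other isotypic components, commutes with every
`A`-endomorphism of `V × W`. By the Jacobson density theorem it is therefore the action of a single
`a ∈ A`, and the trace of `a` on `V` (resp. `W`) is the dimension of the `S`-isotypic component
of `V` (resp. `W`). So equal characters give isotypic components of equal dimension: every simple
summand of `V` also occurs in `W`, and splitting it off on both sides reduces the dimension.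
-/

open Module LinearMap

instance IsSemisimpleModule.prod {A M N : Type*} [Ring A] [AddCommGroup M] [Module A M]
    [AddCommGroup N] [Module A N] [IsSemisimpleModule A M] [IsSemisimpleModule A N] :
    IsSemisimpleModule A (M × N) :=
  have := IsSemisimpleModule.sup (.range (inl A M N)) (.range (inr A M N))
  .congr (Submodule.topEquiv.symm.trans (LinearEquiv.ofEq _ _ sup_range_inl_inr.symm))

instance Submodule.finiteDimensional_of_isScalarTower {K A M : Type*} [Field K] [Ring A]
    [Algebra K A] [AddCommGroup M] [Module K M] [Module A M] [IsScalarTower K A M]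
    [FiniteDimensional K M] (S : Submodule A M) : FiniteDimensional K S :=
  inferInstanceAs (FiniteDimensional K (S.restrictScalars K))

theorem exists_smul_eq_of_forall_commute (K : Type*) {A P : Type*} [Field K] [Ring A]
    [Algebra K A] [AddCommGroup P] [Module K P] [Module A P] [IsScalarTower K A P]
    [FiniteDimensional K P] [IsSemisimpleModule A P] (f : Module.End A P)
    (hf : ∀ g : Module.End A P, Commute f g) :
    ∃ a : A, ∀ x, a • x = f x := by
  have : Module.Finite (Module.End A P) P := Module.Finite.of_restrictScalars_finite K _ _
  let f' : Module.End (Module.End A P) P :=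
    { toFun := f, map_add' := f.map_add, map_smul' := fun g x => congr($(hf g) x) }
  obtain ⟨a, ha⟩ := Module.Finite.toModuleEnd_moduleEnd_surjective (R := A) (M := P) f'
  exact ⟨a, fun x => congr($ha x)⟩

namespace Submodule.IsFullyInvariant

variable {A P : Type*} [Ring A] [AddCommGroup P] [Module A P] [IsSemisimpleModule A P]
  {c : Submodule A P}

theorem exists_isCompl (hc : c.IsFullyInvariant) :
    ∃ d : Submodule A P, d.IsFullyInvariant ∧ IsCompl c d :=
  CompleteSublattice.isComplemented_iff.mp OrderIso.setIsotypicComponents.complementedLattice c hc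

theorem exists_isProj_lsmul (K : Type*) [Field K] [Algebra K A] [Module K P]
    [IsScalarTower K A P] [FiniteDimensional K P] (hc : c.IsFullyInvariant) :
    ∃ a : A, IsProj (c.restrictScalars K) (Algebra.lsmul K K P a) := by
  obtain ⟨d, hd, hcd⟩ := hc.exists_isCompl
  have hcomm (g : Module.End A P) : Commute (c.projection d hcd) g :=
    (isIdempotentElem_projection hcd).commute_iff.mpr
      ⟨by rw [range_projection]; exact hc g, by rw [ker_projection]; exact hd g⟩
  obtain ⟨a, ha⟩ := exists_smul_eq_of_forall_commute K _ hcomm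
  refine ⟨a, fun x => ?_, fun x hx => ?_⟩
  · rw [Algebra.lsmul_apply, ha]
    exact projection_apply_mem hcd x
  · rw [Algebra.lsmul_apply, ha]
    exact projection_apply_left hcd ⟨x, hx⟩

end Submodule.IsFullyInvariant

theorem isotypicComponent_comap_of_injective {A M P : Type*} [Ring A] [AddCommGroup M]
    [Module A M] [AddCommGroup P] [Module A P] [IsSemisimpleModule A M] (S : Type*)
    [AddCommGroup S] [Module A S] [IsSimpleModule A S] {f : M →ₗ[A] P}
    (hf : Function.Injective f) :
    (isotypicComponent A P S).comap f = isotypicComponent A M S :=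
  le_antisymm
    (le_isotypicComponent_iff.mpr <| (IsIsotypicOfType.isotypicComponent A P S).of_injective
      (f.restrict fun _ hx => hx) fun _ _ h => Subtype.ext (hf congr(($h).1)))
    (f.le_comap_isotypicComponent S)

section Character

variable (K A : Type*) [Field K] [Ring A] [Algebra K A]

noncomputable def moduleCharacter (M : Type*) [AddCommGroup M] [Module K M] [Module A M]
    [IsScalarTower K A M] : A →ₗ[K] K :=
  trace K M ∘ₗ (Algebra.lsmul K K M).toLinearMap

variable {K A} {M N : Type*} [AddCommGroup M] [Module K M] [Module A M] [IsScalarTower K A M]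
  [AddCommGroup N] [Module K N] [Module A N] [IsScalarTower K A N]

theorem moduleCharacter_apply (a : A) :
    moduleCharacter K A M a = trace K M (Algebra.lsmul K K M a) :=
  rfl

theorem moduleCharacter_one [FiniteDimensional K M] : moduleCharacter K A M 1 = finrank K M := by
  rw [moduleCharacter_apply, map_one, trace_one]

theorem moduleCharacter_congr (e : M ≃ₗ[A] N) :
    moduleCharacter K A M = moduleCharacter K A N := by
  refine LinearMap.ext fun a => ?_
  rw [moduleCharacter_apply, moduleCharacter_apply, ← trace_conj' _ (e.restrictScalars K)]
  congr 1
  ext x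
  simp [LinearEquiv.conj_apply]

theorem moduleCharacter_prod [FiniteDimensional K M] [FiniteDimensional K N] :
    moduleCharacter K A (M × N) = moduleCharacter K A M + moduleCharacter K A N := by
  refine LinearMap.ext fun a => ?_
  have : Algebra.lsmul K K (M × N) a = (Algebra.lsmul K K M a).prodMap (Algebra.lsmul K K N a) :=
    rfl
  rw [LinearMap.add_apply, moduleCharacter_apply, this, trace_prodMap']
  rfl

theorem moduleCharacter_eq_finrank_of_isProj [FiniteDimensional K M] {c : Submodule A M} {a : A}
    (h : IsProj (c.restrictScalars K) (Algebra.lsmul K K M a)) :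
    moduleCharacter K A M a = finrank K c :=
  h.trace

end Character

section Isotypic

variable {K A : Type*} [Field K] [Ring A] [Algebra K A] {M N : Type*}
  [AddCommGroup M] [Module K M] [Module A M] [IsScalarTower K A M] [FiniteDimensional K M]
  [IsSemisimpleModule A M]
  [AddCommGroup N] [Module K N] [Module A N] [IsScalarTower K A N] [FiniteDimensional K N]
  [IsSemisimpleModule A N]

theorem moduleCharacter_eq_finrank_isotypicComponent {P : Type*} [AddCommGroup P] [Module K P]
    [Module A P] [IsScalarTower K A P] (S : Type*) [AddCommGroup S] [Module A S]
    [IsSimpleModule A S] {a : A}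
    (ha : IsProj ((isotypicComponent A P S).restrictScalars K) (Algebra.lsmul K K P a))
    {f : M →ₗ[A] P} (hf : Function.Injective f) :
    moduleCharacter K A M a = finrank K (isotypicComponent A M S) := by
  rw [← isotypicComponent_comap_of_injective S hf]
  refine moduleCharacter_eq_finrank_of_isProj ⟨fun x => ?_, fun x hx => hf ?_⟩
  · rw [Submodule.restrictScalars_mem, Submodule.mem_comap, Algebra.lsmul_apply, map_smul]
    exact ha.map_mem _
  · rw [Algebra.lsmul_apply, map_smul]
    exact ha.map_id _ hx

theorem finrank_isotypicComponent_eq_of_moduleCharacter_eq [CharZero K]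
    (h : moduleCharacter K A M = moduleCharacter K A N)
    (S : Type*) [AddCommGroup S] [Module A S] [IsSimpleModule A S] :
    finrank K (isotypicComponent A M S) = finrank K (isotypicComponent A N S) := by
  obtain ⟨a, ha⟩ :=
    (Submodule.IsFullyInvariant.isotypicComponent A (M × N) S).exists_isProj_lsmul K
  have hM := moduleCharacter_eq_finrank_isotypicComponent S ha (f := inl A M N) inl_injective
  have hN := moduleCharacter_eq_finrank_isotypicComponent S ha (f := inr A M N) inr_injective
  exact_mod_cast hM.symm.trans (h ▸ hN)

theorem exists_linearEquiv_of_moduleCharacter_eq [CharZero K]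
    (h : moduleCharacter K A M = moduleCharacter K A N) (S : Submodule A M)
    [IsSimpleModule A S] :
    ∃ T : Submodule A N, Nonempty (S ≃ₗ[A] T) := by
  have : Nontrivial (isotypicComponent A M S) :=
    Submodule.nontrivial_iff_ne_bot.mpr (bot_lt_isotypicComponent S).ne'
  have hN : isotypicComponent A N S ≠ ⊥ := by
    rw [← Submodule.nontrivial_iff_ne_bot, ← finrank_pos_iff (R := K),
      ← finrank_isotypicComponent_eq_of_moduleCharacter_eq h]
    exact finrank_pos
  obtain ⟨T, hT, _⟩ := (IsSemisimpleModule.eq_bot_or_exists_simple_le _).resolve_left hN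
  obtain ⟨e⟩ := isIsotypicOfType_submodule_iff.mp (IsIsotypicOfType.isotypicComponent A N S) T hT
  exact ⟨T, ⟨e.symm⟩⟩

theorem nonempty_linearEquiv_of_moduleCharacter_eq [CharZero K]
    (h : moduleCharacter K A M = moduleCharacter K A N) : Nonempty (M ≃ₗ[A] N) := by
  induction hn : finrank K M using Nat.strong_induction_on generalizing M N with
  | _ n ih =>
  rcases subsingleton_or_nontrivial M with hM | hM
  · have hN : finrank K N = 0 := by
      have := congr($h 1)
      rw [moduleCharacter_one, moduleCharacter_one, finrank_zero_of_subsingleton] at this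
      exact_mod_cast this.symm
    have : Subsingleton N := finrank_zero_iff.mp hN
    exact ⟨LinearEquiv.ofSubsingleton M N⟩
  obtain ⟨S, -, _⟩ :=
    (IsSemisimpleModule.eq_bot_or_exists_simple_le (⊤ : Submodule A M)).resolve_left top_ne_bot
  obtain ⟨T, ⟨eST⟩⟩ := exists_linearEquiv_of_moduleCharacter_eq h S
  obtain ⟨M', hM'⟩ := exists_isCompl S
  obtain ⟨N', hN'⟩ := exists_isCompl T
  let eM := Submodule.prodEquivOfIsCompl S M' hM'
  let eN := Submodule.prodEquivOfIsCompl T N' hN'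
  have hchar : moduleCharacter K A M' = moduleCharacter K A N' := by
    rw [← moduleCharacter_congr eM, ← moduleCharacter_congr eN, moduleCharacter_prod,
      moduleCharacter_prod, moduleCharacter_congr eST] at h
    exact add_left_cancel h
  have hlt : finrank K M' < n := by
    have := IsSimpleModule.nontrivial A S
    have : 0 < finrank K S := finrank_pos
    rw [← hn, ← (eM.restrictScalars K).finrank_eq, finrank_prod]
    omega
  obtain ⟨e'⟩ := ih _ hlt hchar rfl
  exact ⟨eM.symm.trans ((eST.prodCongr e').trans eN)⟩

end Isotypic

namespace FDRep

variable {k G : Type*} [Field k] [Monoid G]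

theorem moduleCharacter_asModule_single (V : FDRep k G) (g : G) :
    moduleCharacter k (MonoidAlgebra k G) (Representation.asModule V.ρ)
      (MonoidAlgebra.single g 1) = V.character g := by
  rw [moduleCharacter_apply]
  congr 1
  ext v
  simp only [Algebra.lsmul_coe, Representation.single_smul, one_smul]
  rfl

theorem moduleCharacter_asModule_eq {V W : FDRep k G}
    (h : ∀ g : G, V.character g = W.character g) :
    moduleCharacter k (MonoidAlgebra k G) (Representation.asModule V.ρ) =
      moduleCharacter k (MonoidAlgebra k G) (Representation.asModule W.ρ) :=
  MonoidAlgebra.lhom_ext' fun g => LinearMap.ext_ring <| by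
    simp [moduleCharacter_asModule_single, h]

noncomputable def isoOfLinearEquivAsModule {V W : FDRep k G}
    (e : Representation.asModule V.ρ ≃ₗ[MonoidAlgebra k G] Representation.asModule W.ρ) :
    V ≅ W :=
  Action.mkIso (e.restrictScalars k).toFGModuleCatIso fun g => by
    ext x
    have key (v : Representation.asModule V.ρ) :
        e (MonoidAlgebra.single g (1 : k) • v) = MonoidAlgebra.single g (1 : k) • e v :=
      e.map_smul _ v
    simp only [Representation.single_smul, one_smul] at key
    exact key x

end FDRep

theorem iso_of_character_eq (G : Type) [Monoid G] (V W : FDRep ℂ G)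
    (hV : IsSemisimpleModule (MonoidAlgebra ℂ G) (Representation.asModule V.ρ))
    (hW : IsSemisimpleModule (MonoidAlgebra ℂ G) (Representation.asModule W.ρ))
    (h : ∀ g : G, V.character g = W.character g) :
    Nonempty (V ≅ W) := by
  obtain ⟨e⟩ := nonempty_linearEquiv_of_moduleCharacter_eq (FDRep.moduleCharacter_asModule_eq h)
  exact ⟨FDRep.isoOfLinearEquivAsModule e⟩
end

section
/- Let G be a monoid and V₁, ..., Vᵣ pairwise non-isomorphic irreducible finite-dimensional complex representations of G. Then their characters χ(V₁), ..., χ(Vᵣ), viewed as functions G → ℂ, are linearly independent. -/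
/-!
Let `A = ℂ[G]` and let `Mᵢ` be the `A`-module underlying `Vᵢ`. Since the `Mᵢ` are simple and
pairwise non-isomorphic, there are no nonzero `A`-linear maps between distinct `Mᵢ`, so the
projection of `⨁ Mᵢ` onto `Mⱼ` commutes with every `A`-endomorphism of `⨁ Mᵢ`. By the Jacobson
density theorem it is the action of some `a ∈ A`. Evaluating a relation `∑ cᵢ tr(· | Mᵢ) = 0` of
trace functionals at `a` gives `cⱼ · dim Mⱼ = 0`. A relation between characters is such a relation,
restricted to the basis `G` of `A`.
-/

open CategoryTheory Module LinearMap Representation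

section

variable {A ι : Type*} [Ring A] [DecidableEq ι] {M : ι → Type*}
  [∀ i, AddCommGroup (M i)] [∀ i, Module A (M i)]

theorem LinearMap.single_comp_proj_commute [Finite ι]
    (hM : ∀ i j, i ≠ j → Subsingleton (M i →ₗ[A] M j)) (φ : Module.End A (Π i, M i)) (j : ι) :
    Commute (single A M j ∘ₗ proj j) φ := by
  have hφ : ∀ i l, i ≠ l → ∀ x, φ (Pi.single l x) i = 0 := fun i l hil x =>
    have := hM l i hil.symm
    congr($(Subsingleton.elim (proj i ∘ₗ φ ∘ₗ single A M l) 0) x)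
  refine pi_ext fun l x => funext fun i => ?_
  rcases eq_or_ne l j with rfl | hlj
  · rcases eq_or_ne i l with rfl | hil
    · simp
    · simp [Pi.single_eq_of_ne hil, hφ i l hil]
  · simp [Pi.single_eq_of_ne hlj.symm, hφ j l hlj.symm]

variable [Fintype ι] [∀ i, IsSemisimpleModule A (M i)]

theorem exists_smul_eq_single_proj (k : Type*) [CommRing k] [Algebra k A] [∀ i, Module k (M i)]
    [∀ i, IsScalarTower k A (M i)] [∀ i, Module.Finite k (M i)]
    (hM : ∀ i j, i ≠ j → Subsingleton (M i →ₗ[A] M j)) (j : ι) :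
    ∃ a : A, ∀ v : Π i, M i, a • v = Pi.single j (v j) := by
  let e : Module.End (Module.End A (Π i, M i)) (Π i, M i) :=
    { toFun := single A M j ∘ₗ proj j
      map_add' := map_add _
      map_smul' := fun φ v => congr($(single_comp_proj_commute hM φ j) v) }
  have := Module.Finite.of_restrictScalars_finite k (Module.End A (Π i, M i)) (Π i, M i)
  obtain ⟨a, ha⟩ := Module.Finite.toModuleEnd_moduleEnd_surjective e
  exact ⟨a, fun v => congr($ha v)⟩

omit [DecidableEq ι] in
theorem linearIndependent_trace_lsmul {k : Type*} [Field k] [CharZero k] [Algebra k A]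
    [∀ i, Module k (M i)] [∀ i, IsScalarTower k A (M i)] [∀ i, FiniteDimensional k (M i)]
    [∀ i, Nontrivial (M i)] (hM : ∀ i j, i ≠ j → Subsingleton (M i →ₗ[A] M j)) :
    LinearIndependent k fun i =>
      trace k (M i) ∘ₗ (Algebra.lsmul k (A := A) k (M i)).toLinearMap := by
  classical
  refine Fintype.linearIndependent_iff.mpr fun c hc j => ?_
  obtain ⟨a, ha⟩ := exists_smul_eq_single_proj k hM j
  have hj : Algebra.lsmul k k (M j) a = 1 := by
    ext x
    simpa using congr_fun (ha (Pi.single j x)) j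
  have hi : ∀ i ≠ j, Algebra.lsmul k k (M i) a = 0 := fun i hij => by
    ext x
    simpa [Pi.single_eq_of_ne hij] using congr_fun (ha (Pi.single i x)) i
  have hsum : ∑ i, c i * trace k (M i) (Algebra.lsmul k k (M i) a) = 0 := by
    simpa using congr($hc a)
  rw [Finset.sum_eq_single j (fun i _ hij => by simp [hi i hij]) (by simp), hj, trace_one] at hsum
  exact (mul_eq_zero.mp hsum).resolve_right (Nat.cast_ne_zero.mpr finrank_pos.ne')

end

theorem MonoidAlgebra.linearIndependent_comp_of {k G N ι : Type*} [CommSemiring k] [Monoid G]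
    [AddCommMonoid N] [Module k N] {φ : ι → MonoidAlgebra k G →ₗ[k] N}
    (hφ : LinearIndependent k φ) : LinearIndependent k fun i g => φ i (of k G g) :=
  hφ.map_injOn (LinearMap.pi fun g => applyₗ (of k G g)) fun ψ _ ψ' _ h => by
    ext g
    simpa using congr_fun h g

namespace Representation

variable {k G : Type*} [Field k] [Monoid G]

theorem character_eq_trace_lsmul_of {V : Type*} [AddCommGroup V] [Module k V]
    (ρ : Representation k G V) (g : G) :
    ρ.character g = trace k ρ.asModule (Algebra.lsmul k k ρ.asModule (MonoidAlgebra.of k G g)) := by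
  rw [← trace_conj' _ ρ.asModuleEquiv]
  unfold character
  congr 1
  ext v
  rw [LinearEquiv.conj_apply_apply, Algebra.lsmul_apply, asModuleEquiv_map_smul, asAlgebraHom_of,
    LinearEquiv.apply_symm_apply]

theorem linearIndependent_character [CharZero k] {ι : Type*} [Fintype ι] {V : ι → Type*}
    [∀ i, AddCommGroup (V i)] [∀ i, Module k (V i)] [∀ i, FiniteDimensional k (V i)]
    (ρ : ∀ i, Representation k G (V i)) [∀ i, IsIrreducible (ρ i)]
    (hρ : ∀ i j, i ≠ j → IsEmpty ((ρ i).Equiv (ρ j))) :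
    LinearIndependent k fun i => (ρ i).character := by
  have hM : ∀ i j, i ≠ j → Subsingleton ((ρ i).asModule →ₗ[MonoidAlgebra k G] (ρ j).asModule) :=
    fun i j hij =>
      have := hρ i j hij
      (IntertwiningMap.equivLinearMapAsModule (ρ i) (ρ j)).symm.subsingleton
  have := fun i => IsSimpleModule.nontrivial (MonoidAlgebra k G) (ρ i).asModule
  have htr := linearIndependent_trace_lsmul (k := k) hM
  have hres := MonoidAlgebra.linearIndependent_comp_of htr
  exact (funext fun i => funext (character_eq_trace_lsmul_of (ρ i))) ▸ hres

end Representation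

namespace FDRep

variable {k G : Type*} [Field k] [Monoid G]

noncomputable def subrepresentationι (V : FDRep k G) (W : Subrepresentation V.ρ) :
    FDRep.of W.toRepresentation ⟶ V :=
  forget₂HomLinearEquiv _ _ (Rep.ofHom ⟨W.toSubmodule.subtype, fun _ => rfl⟩)

instance (V : FDRep k G) (W : Subrepresentation V.ρ) : Mono (subrepresentationι V W) :=
  ConcreteCategory.mono_of_injective _ Subtype.val_injective

theorem isIrreducible_of_simple (V : FDRep k G) [Simple V] : IsIrreducible V.ρ where
  exists_pair_ne := ⟨⊥, ⊤, fun h => id_nonzero V <| by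
    ext v
    exact (h ▸ trivial : v ∈ (⊥ : Subrepresentation V.ρ))⟩
  eq_bot_or_eq_top W := by
    by_cases h : subrepresentationι V W = 0
    · refine .inl (Subrepresentation.toSubmodule_injective ?_)
      exact (Submodule.eq_bot_iff _).2 fun w hw => congr($h ⟨w, hw⟩)
    · have := (Simple.mono_isIso_iff_nonzero (subrepresentationι V W)).2 h
      refine .inr (Subrepresentation.toSubmodule_injective (Submodule.eq_top_iff'.2 fun v => ?_))
      obtain ⟨w, rfl⟩ := (ConcreteCategory.bijective_of_isIso (subrepresentationι V W)).2 v
      exact w.2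

theorem isEmpty_equiv_of_isEmpty_iso {V W : FDRep k G} (h : IsEmpty (V ≅ W)) :
    IsEmpty (Representation.Equiv V.ρ W.ρ) :=
  ⟨fun e => h.false ((forget₂ (FDRep k G) (Rep k G)).preimageIso (Rep.mkIso e))⟩

end FDRep

theorem characters_linearIndependent (G : Type) [Monoid G] (r : ℕ)
    (V : Fin r → FDRep ℂ G)
    (hirr : ∀ i, Simple (V i))
    (hne : ∀ i j, i ≠ j → IsEmpty (V i ≅ V j)) :
    LinearIndependent ℂ (fun i => (V i).character) :=
  have := fun i => FDRep.isIrreducible_of_simple (V i)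
  linearIndependent_character (fun i => (V i).ρ)
    fun i j hij => FDRep.isEmpty_equiv_of_isEmpty_iso (hne i j hij)
end

section
/- Let {A₁,...,A_k} and {B₁,...,B_k} be m×n complex matrices, and suppose there is a unitary m×m matrix U with U Aᵢ Aⱼᴴ Uᴴ = Bᵢ Bⱼᴴ for all i, j. Then there exists a unitary n×n matrix V such that U Aᵢ = Bᵢ V for all i, i.e., the families are simultaneously unitarily equivalent. -/
open Matrix

/-!
Write `Xᵢ = U Aᵢ`. The hypothesis says that the rows of all the `Xᵢ` together have the same Gram
matrix as the rows of all the `Bᵢ`. Two finite families of vectors with equal Gram matrices differ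
by an isometry of their span, which extends to a unitary map `W` of `ℂⁿ`; the rows of `Bᵢ` are
sent to those of `Xᵢ`, so `Xᵢ = Bᵢ V` where `V` is the transpose of the matrix of `W`.
-/

theorem LinearMap.exists_linearIsometry_range_of_norm_eq {R M E F : Type*} [Ring R]
    [AddCommGroup M] [Module R M] [SeminormedAddCommGroup E] [Module R E]
    [NormedAddCommGroup F] [Module R F] (T : M →ₗ[R] E) (T' : M →ₗ[R] F)
    (h : ∀ c, ‖T' c‖ = ‖T c‖) :
    ∃ L : range T →ₗᵢ[R] F, ∀ c, L ⟨T c, mem_range_self T c⟩ = T' c := by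
  have hker : ker T ≤ ker T' := fun c hc => by
    rw [mem_ker] at hc ⊢
    rw [← norm_eq_zero, h, hc, norm_zero]
  let L₀ := (ker T).liftQ T' hker ∘ₗ T.quotKerEquivRange.symm.toLinearMap
  have hL₀ : ∀ c, L₀ ⟨T c, mem_range_self T c⟩ = T' c := fun c => by
    simp only [L₀, coe_comp, LinearEquiv.coe_coe, Function.comp_apply,
      quotKerEquivRange_symm_apply_image, Submodule.mkQ_apply, Submodule.liftQ_apply]
  refine ⟨⟨L₀, ?_⟩, hL₀⟩
  rintro ⟨_, c, rfl⟩
  rw [hL₀, h]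
  rfl

theorem exists_linearIsometryEquiv_apply_eq_of_inner_eq {𝕜 E ι : Type*} [RCLike 𝕜]
    [NormedAddCommGroup E] [InnerProductSpace 𝕜 E] [FiniteDimensional 𝕜 E] [Fintype ι]
    {x y : ι → E} (h : ∀ p q, inner 𝕜 (x p) (x q) = inner 𝕜 (y p) (y q)) :
    ∃ W : E ≃ₗᵢ[𝕜] E, ∀ p, W (x p) = y p := by
  classical
  set T := Fintype.linearCombination 𝕜 x
  set T' := Fintype.linearCombination 𝕜 y
  have hinner : ∀ c d, inner 𝕜 (T c) (T d) = inner 𝕜 (T' c) (T' d) := fun c d => by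
    simp only [T, T', Fintype.linearCombination_apply, sum_inner, inner_sum, inner_smul_left,
      inner_smul_right, h]
  obtain ⟨L, hL⟩ := T.exists_linearIsometry_range_of_norm_eq T' fun c => by
    rw [@norm_eq_sqrt_re_inner 𝕜, @norm_eq_sqrt_re_inner 𝕜, hinner]
  refine ⟨L.extend.toLinearIsometryEquiv rfl, fun p => ?_⟩
  have hext : L.extend (T (Pi.single p 1)) = T' (Pi.single p 1) :=
    (L.extend_apply _).trans (hL _)
  simpa only [T, T', LinearIsometry.toLinearIsometryEquiv_apply,
    Fintype.linearCombination_apply_single, one_smul] using hext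

theorem Matrix.exists_mem_unitaryGroup_forall_eq_mul {𝕜 κ ι n : Type*} [RCLike 𝕜] [Fintype κ]
    [Fintype ι] [Fintype n] [DecidableEq n] {F G : κ → Matrix ι n 𝕜}
    (h : ∀ i j, F i * (F j)ᴴ = G i * (G j)ᴴ) :
    ∃ V ∈ unitaryGroup n 𝕜, ∀ i, F i = G i * V := by
  have hrows : ∀ p q : κ × ι, inner 𝕜 (WithLp.toLp 2 (G p.1 p.2)) (WithLp.toLp 2 (G q.1 q.2)) =
      inner 𝕜 (WithLp.toLp 2 (F p.1 p.2)) (WithLp.toLp 2 (F q.1 q.2)) := fun p q => by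
    rw [inner_matrix_row_row, inner_matrix_row_row, h]
  obtain ⟨W, hW⟩ := exists_linearIsometryEquiv_apply_eq_of_inner_eq hrows
  set M : Matrix n n 𝕜 := toEuclideanLin.symm W.toLinearMap
  have hM : M ∈ unitaryGroup n 𝕜 :=
    W.toMatrix_mem_unitaryGroup (EuclideanSpace.basisFun n 𝕜) (EuclideanSpace.basisFun n 𝕜)
  have hWM : W.toLinearMap = toEuclideanLin M := (toEuclideanLin.apply_symm_apply _).symm
  refine ⟨Mᵀ, transpose_mem_unitaryGroup_iff.2 hM, fun i => ?_⟩
  ext r : 1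
  have hrow := congr(WithLp.ofLp $(LinearMap.congr_fun hWM (WithLp.toLp 2 (G i r))))
  simp only [LinearIsometryEquiv.coe_toLinearEquiv, LinearEquiv.coe_coe, hW (i, r), toLpLin_toLp,
    toLin'_apply] at hrow
  rw [hrow, mul_apply_eq_vecMul, vecMul_transpose]

theorem simultaneous_unitary_equivalence_general (m n k : ℕ)
    (A B : Fin k → Matrix (Fin m) (Fin n) ℂ)
    (U : Matrix (Fin m) (Fin m) ℂ)
    (h : ∀ i j, U * (A i * (A j)ᴴ) * Uᴴ = B i * (B j)ᴴ) :
    ∃ V : Matrix (Fin n) (Fin n) ℂ, V * Vᴴ = 1 ∧ ∀ i, U * A i = B i * V := by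
  obtain ⟨V, hV, hUA⟩ := exists_mem_unitaryGroup_forall_eq_mul (F := fun i => U * A i) (G := B)
    fun i j => by rw [← h, conjTranspose_mul, Matrix.mul_assoc, Matrix.mul_assoc, Matrix.mul_assoc]
  exact ⟨V, mem_unitaryGroup_iff.1 hV, hUA⟩

theorem simultaneous_unitary_equivalence (m n k : ℕ)
    (A B : Fin k → Matrix (Fin m) (Fin n) ℂ)
    (U : Matrix (Fin m) (Fin m) ℂ) (hU : U * Uᴴ = 1)
    (h : ∀ i j, U * (A i * (A j)ᴴ) * Uᴴ = B i * (B j)ᴴ) :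
    ∃ V : Matrix (Fin n) (Fin n) ℂ, V * Vᴴ = 1 ∧ ∀ i, U * A i = B i * V :=
  simultaneous_unitary_equivalence_general m n k A B U h
end
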